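/- Fix d ≥ 3 and k = ⌈ln n⌉, and suppose p = p(n) ∈ (0,1) is chosen so that C(n,k)·(1-(1-p)^M)^{n-k} → δ for a constant 0 < δ < 1, where M = C(n-1,d-1) - C(n-1-k,d-1). Then (1-p)^M ~ (ln n)²/n and p ~ (d-2)!/n^{d-2} as n → ∞. -/

import Mathlib

open Filter Real Finset

private lemma auxA (a b : ℝ) : Tendsto (fun n : ℕ => (a * Real.log n + b) / n) atTop (nhds 0) := by
  have h1 : Tendsto (fun n : ℕ => Real.log n / n) atTop (nhds 0) := by
    have := (Real.tendsto_pow_log_div_mul_add_atTop 1 0 1 one_ne_zero).comp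
      (tendsto_natCast_atTop_atTop (R := ℝ))
    simpa [Function.comp_def] using this
  have h2 : Tendsto (fun n : ℕ => b / n) atTop (nhds 0) :=
    tendsto_const_nhds.div_atTop (tendsto_natCast_atTop_atTop)
  have h := (h1.const_mul a).add h2
  rw [mul_zero, add_zero] at h
  exact h.congr fun n => by rw [add_div, mul_div_assoc]

private lemma auxlog2 : Tendsto (fun n : ℕ => (Real.log n)^2 / n) atTop (nhds 0) := by
  have := (Real.tendsto_pow_log_div_mul_add_atTop 1 0 2 one_ne_zero).comp
    (tendsto_natCast_atTop_atTop (R := ℝ))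
  simpa [Function.comp_def] using this

private lemma auxloglog : Tendsto (fun n : ℕ => Real.log (Real.log n) / Real.log n) atTop (nhds 0) := by
  have hl : Tendsto (fun n : ℕ => Real.log n) atTop atTop :=
    Real.tendsto_log_atTop.comp tendsto_natCast_atTop_atTop
  have := (Real.tendsto_pow_log_div_mul_add_atTop 1 0 1 one_ne_zero).comp hl
  simpa [Function.comp_def] using this

private lemma aux_neglog {x : ℝ} (h0 : 0 < x) (h1 : x < 1) :
    x ≤ -Real.log (1 - x) ∧ -Real.log (1 - x) ≤ x / (1 - x) := by
  have hpos : 0 < 1 - x := by linarith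
  constructor
  · have := Real.log_le_sub_one_of_pos hpos
    linarith
  · have h2 := Real.log_le_sub_one_of_pos (inv_pos.mpr hpos)
    rw [Real.log_inv] at h2
    have h3 : (1 - x)⁻¹ - 1 = x / (1 - x) := by field_simp; ring
    linarith

private lemma aux_ratio_one {f : ℕ → ℝ} (h0 : Tendsto f atTop (nhds 0))
    (hf : ∀ᶠ n in atTop, 0 < f n ∧ f n < 1) :
    Tendsto (fun n => f n / (-Real.log (1 - f n))) atTop (nhds 1) := by
  have hg : Tendsto (fun n => 1 - f n) atTop (nhds 1) := by
    simpa using (tendsto_const_nhds (x := (1:ℝ)) (f := atTop)).sub h0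
  refine tendsto_of_tendsto_of_tendsto_of_le_of_le' hg tendsto_const_nhds ?_ ?_
  · filter_upwards [hf] with n ⟨hf0, hf1⟩
    obtain ⟨ha, hb⟩ := aux_neglog hf0 hf1
    have hL : 0 < -Real.log (1 - f n) := lt_of_lt_of_le hf0 ha
    rw [le_div_iff₀ hL]
    calc (1 - f n) * -Real.log (1 - f n) ≤ (1 - f n) * (f n / (1 - f n)) := by
          apply mul_le_mul_of_nonneg_left hb (by linarith)
      _ = f n := by rw [mul_comm]; exact div_mul_cancel₀ _ (by linarith)
  · filter_upwards [hf] with n ⟨hf0, hf1⟩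
    obtain ⟨ha, _⟩ := aux_neglog hf0 hf1
    have hL : 0 < -Real.log (1 - f n) := lt_of_lt_of_le hf0 ha
    rw [div_le_one hL]
    exact ha

private lemma aux_choose_sum (r : ℕ) : ∀ (k m : ℕ), k ≤ m →
    m.choose (r+1) = (m-k).choose (r+1) + ∑ i ∈ range k, (m-1-i).choose r := by
  intro k
  induction k with
  | zero => simp
  | succ k ih =>
    intro m hm
    rw [Finset.sum_range_succ, ih m (by omega)]
    have h2 : m - k = (m - (k+1)) + 1 := by omega
    rw [h2, Nat.choose_succ_succ]
    have h3 : m - (k+1) = m - 1 - k := by omega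
    rw [h3]
    ring

private lemma aux_ev (c : ℕ) : ∀ᶠ n : ℕ in atTop,
    1 ≤ Real.log n ∧ Real.log n ≤ (⌈Real.log n⌉₊ : ℝ) ∧
    (⌈Real.log n⌉₊ : ℝ) ≤ Real.log n + 1 ∧ 2 * (⌈Real.log n⌉₊ + c) ≤ n := by
  have h1 : ∀ᶠ n : ℕ in atTop, 1 ≤ Real.log n :=
    (Real.tendsto_log_atTop.comp tendsto_natCast_atTop_atTop).eventually_ge_atTop 1
  have h2 : ∀ᶠ n : ℕ in atTop, (2 * Real.log n + (2 * c + 2 : ℝ)) / n < 1 :=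
    (auxA 2 (2 * c + 2)).eventually_lt_const one_pos
  filter_upwards [h1, h2, eventually_gt_atTop 0] with n hlog hsm hn0
  have hcl : (⌈Real.log n⌉₊ : ℝ) ≤ Real.log n + 1 := (Nat.ceil_lt_add_one (by linarith)).le
  refine ⟨hlog, Nat.le_ceil _, hcl, ?_⟩
  have hn0' : (0:ℝ) < n := by exact_mod_cast hn0
  rw [div_lt_one hn0'] at hsm
  have : (2 * (⌈Real.log n⌉₊ + c) : ℝ) < n := by push_cast; nlinarith
  exact_mod_cast this.le

private lemma aux_kn : Tendsto (fun n : ℕ => (⌈Real.log n⌉₊ : ℝ) / n) atTop (nhds 0) := by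
  refine tendsto_of_tendsto_of_tendsto_of_le_of_le' tendsto_const_nhds
    ((auxA 1 1).congr fun n => by rw [one_mul]) ?_ ?_
  · filter_upwards [eventually_gt_atTop 0] with n hn
    positivity
  · filter_upwards [aux_ev 0, eventually_gt_atTop 0] with n ⟨h1, h2, h3, h4⟩ hn
    have : (0:ℝ) < n := by exact_mod_cast hn
    gcongr

private lemma aux_logtop : Tendsto (fun n : ℕ => Real.log n) atTop atTop :=
  Real.tendsto_log_atTop.comp tendsto_natCast_atTop_atTop

private lemma aux_logk : Tendsto (fun n : ℕ => Real.log (⌈Real.log n⌉₊ : ℝ) / Real.log n)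
    atTop (nhds 0) := by
  have hup : Tendsto (fun n : ℕ => (Real.log 2 + Real.log (Real.log n)) / Real.log n)
      atTop (nhds 0) := by
    have h := (tendsto_const_nhds (x := Real.log 2) (f := atTop)).div_atTop aux_logtop
    have h2 := h.add auxloglog
    rw [add_zero] at h2
    exact h2.congr fun n => (add_div _ _ _).symm
  refine tendsto_of_tendsto_of_tendsto_of_le_of_le' tendsto_const_nhds hup ?_ ?_
  · filter_upwards [aux_ev 0] with n ⟨h1, h2, h3, h4⟩
    have hk1 : (1:ℝ) ≤ (⌈Real.log n⌉₊ : ℝ) := by linarith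
    exact div_nonneg (Real.log_nonneg hk1) (by linarith)
  · filter_upwards [aux_ev 0] with n ⟨h1, h2, h3, h4⟩
    have hk1 : (1:ℝ) ≤ (⌈Real.log n⌉₊ : ℝ) := by linarith
    have hb : (⌈Real.log n⌉₊ : ℝ) ≤ 2 * Real.log n := by linarith
    have : Real.log (⌈Real.log n⌉₊ : ℝ) ≤ Real.log 2 + Real.log (Real.log n) := by
      rw [← Real.log_mul two_ne_zero (by linarith)]
      exact Real.log_le_log (by linarith) hb
    gcongr

private lemma aux_lognk : Tendsto
    (fun n : ℕ => Real.log ((n : ℝ) - (⌈Real.log n⌉₊ : ℝ)) / Real.log n) atTop (nhds 1) := by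
  have hlo : Tendsto (fun n : ℕ => (Real.log n - Real.log 2) / Real.log n) atTop (nhds 1) := by
    have h := (tendsto_const_nhds (x := Real.log 2) (f := atTop)).div_atTop aux_logtop
    have h2 := ((tendsto_const_nhds (x := (1:ℝ)) (f := atTop)).sub h)
    rw [sub_zero] at h2
    refine h2.congr' ?_
    filter_upwards [aux_ev 0] with n ⟨h1, _, _, _⟩
    rw [sub_div, div_self (by linarith)]
  refine tendsto_of_tendsto_of_tendsto_of_le_of_le' hlo tendsto_const_nhds ?_ ?_
  · filter_upwards [aux_ev 2, eventually_gt_atTop 0] with n ⟨h1, h2, h3, h4⟩ hn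
    have hn' : (0:ℝ) < n := by exact_mod_cast hn
    have hk : (2:ℝ) * (⌈Real.log n⌉₊ + 2) ≤ n := by exact_mod_cast h4
    have hhalf : (n:ℝ) / 2 ≤ (n:ℝ) - (⌈Real.log n⌉₊ : ℝ) := by linarith
    have : Real.log n - Real.log 2 ≤ Real.log ((n:ℝ) - (⌈Real.log n⌉₊ : ℝ)) := by
      rw [← Real.log_div (by positivity) two_ne_zero]
      exact Real.log_le_log (by positivity) hhalf
    gcongr
  · filter_upwards [aux_ev 2, eventually_gt_atTop 0] with n ⟨h1, h2, h3, h4⟩ hn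
    have hn' : (0:ℝ) < n := by exact_mod_cast hn
    rw [div_le_one (by linarith)]
    have hk : (2:ℝ) * (⌈Real.log n⌉₊ + 2) ≤ n := by exact_mod_cast h4
    have hkpos : (0:ℝ) ≤ (⌈Real.log n⌉₊ : ℝ) := by positivity
    exact Real.log_le_log (by linarith) (by linarith)

private lemma aux_L : Tendsto
    (fun n : ℕ => Real.log (n.choose ⌈Real.log n⌉₊) / (Real.log n)^2) atTop (nhds 1) := by
  have hlo : Tendsto (fun n : ℕ =>
      (Real.log ((n:ℝ) - (⌈Real.log n⌉₊ : ℝ)) - Real.log (⌈Real.log n⌉₊ : ℝ)) / Real.log n)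
      atTop (nhds 1) := by
    have h := aux_lognk.sub aux_logk
    rw [sub_zero] at h
    exact h.congr fun n => (sub_div _ _ _).symm
  have hup : Tendsto (fun n : ℕ => (Real.log n + 1) / Real.log n) atTop (nhds 1) := by
    have h := (tendsto_const_nhds (x := (1:ℝ)) (f := atTop)).add
      ((tendsto_const_nhds (x := (1:ℝ)) (f := atTop)).div_atTop aux_logtop)
    rw [add_zero] at h
    refine h.congr' ?_
    filter_upwards [aux_ev 0] with n ⟨h1, _, _, _⟩
    rw [add_div, div_self (by linarith)]
  refine tendsto_of_tendsto_of_tendsto_of_le_of_le' hlo hup ?_ ?_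
  · filter_upwards [aux_ev 2, eventually_gt_atTop 0] with n ⟨h1, h2, h3, h4⟩ hn
    set k := ⌈Real.log n⌉₊ with hkdef
    have hk1 : 1 ≤ k := by
      have : (1:ℝ) ≤ (k:ℝ) := by linarith
      exact_mod_cast this
    have hkn : 2 * (k + 2) ≤ n := h4
    have hknR : (2:ℝ) * ((k:ℝ) + 2) ≤ n := by exact_mod_cast h4
    have hkR1 : (1:ℝ) ≤ (k:ℝ) := by exact_mod_cast hk1
    -- ℕ inequality: (n-k)^k ≤ k^k * choose n k
    have hnat : (n - k)^k ≤ k^k * n.choose k := by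
      calc (n - k)^k ≤ (n + 1 - k)^k := Nat.pow_le_pow_left (by omega) k
        _ ≤ n.descFactorial k := n.pow_sub_le_descFactorial k
        _ = k.factorial * n.choose k := Nat.descFactorial_eq_factorial_mul_choose n k
        _ ≤ k^k * n.choose k := Nat.mul_le_mul_right _ (Nat.factorial_le_pow k)
    have hnkpos : 0 < n - k := by omega
    have hcast : ((n - k : ℕ) : ℝ) = (n:ℝ) - (k:ℝ) := by
      have : k ≤ n := by omega
      push_cast [this]; ring
    have hR : ((n:ℝ) - (k:ℝ))^k ≤ (k:ℝ)^k * (n.choose k : ℝ) := by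
      rw [← hcast]
      exact_mod_cast hnat
    have hchoosepos : (0:ℝ) < (n.choose k : ℝ) := by
      have := Nat.choose_pos (show k ≤ n by omega)
      exact_mod_cast this
    have hnkR : (0:ℝ) < (n:ℝ) - (k:ℝ) := by rw [← hcast]; exact_mod_cast hnkpos
    have hlog := Real.log_le_log (by positivity) hR
    rw [Real.log_pow, Real.log_mul (by positivity) (ne_of_gt hchoosepos), Real.log_pow] at hlog
    -- hlog : k * log (n - k) ≤ k * log k + log choose
    have hX : 0 ≤ Real.log ((n:ℝ) - (k:ℝ)) - Real.log (k:ℝ) := by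
      have : (k:ℝ) ≤ (n:ℝ) - (k:ℝ) := by linarith
      have := Real.log_le_log (by linarith) this
      linarith
    have hstep : Real.log n * (Real.log ((n:ℝ) - (k:ℝ)) - Real.log (k:ℝ)) ≤
        Real.log (n.choose k : ℝ) := by
      have h5 : (k:ℝ) * (Real.log ((n:ℝ) - (k:ℝ)) - Real.log (k:ℝ)) ≤
          Real.log (n.choose k : ℝ) := by linarith [hlog]
      nlinarith [mul_le_mul_of_nonneg_right h2 hX]
    rw [div_le_div_iff₀ (by linarith) (by positivity)]
    calc (Real.log ((n:ℝ) - (k:ℝ)) - Real.log (k:ℝ)) * (Real.log n)^2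
        = (Real.log n * (Real.log ((n:ℝ) - (k:ℝ)) - Real.log (k:ℝ))) * Real.log n := by ring
      _ ≤ Real.log (n.choose k : ℝ) * Real.log n := by
          apply mul_le_mul_of_nonneg_right hstep (by linarith)
  · filter_upwards [aux_ev 2, eventually_gt_atTop 0] with n ⟨h1, h2, h3, h4⟩ hn
    set k := ⌈Real.log n⌉₊ with hkdef
    have hkc : k ≤ n := by
      have : 2 * (k + 2) ≤ n := h4
      omega
    have hchoosepos : (0:ℝ) < (n.choose k : ℝ) := by
      have := Nat.choose_pos hkc
      exact_mod_cast this
    have hup2 : Real.log (n.choose k : ℝ) ≤ (k:ℝ) * Real.log n := by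
      have hnat := Nat.choose_le_pow n k
      have hR : (n.choose k : ℝ) ≤ ((n:ℝ))^k := by exact_mod_cast hnat
      have := Real.log_le_log hchoosepos hR
      rwa [Real.log_pow] at this
    rw [div_le_div_iff₀ (by positivity) (by linarith)]
    calc Real.log (n.choose k : ℝ) * Real.log n ≤ ((k:ℝ) * Real.log n) * Real.log n := by
          apply mul_le_mul_of_nonneg_right hup2 (by linarith)
      _ ≤ ((Real.log n + 1) * Real.log n) * Real.log n := by
          apply mul_le_mul_of_nonneg_right (mul_le_mul_of_nonneg_right h3 (by linarith)) (by linarith)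
      _ = (Real.log n + 1) * (Real.log n)^2 := by ring

private lemma aux_M_bounds (d : ℕ) (hd : 3 ≤ d) (n : ℕ) (h : ⌈Real.log n⌉₊ + d ≤ n)
    (hk1 : 1 ≤ ⌈Real.log n⌉₊) :
    ⌈Real.log n⌉₊ * (n - 1 - ⌈Real.log n⌉₊).choose (d-2) ≤
      (n-1).choose (d-1) - (n-1-⌈Real.log n⌉₊).choose (d-1) ∧
    (n-1).choose (d-1) - (n-1-⌈Real.log n⌉₊).choose (d-1) ≤
      ⌈Real.log n⌉₊ * (n-2).choose (d-2) := by
  set k := ⌈Real.log n⌉₊ with hkdef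
  set r := d - 2 with hrdef
  have hr : d - 1 = r + 1 := by omega
  have hkm : k ≤ n - 1 := by omega
  have hsum := aux_choose_sum r k (n-1) hkm
  have hM : (n-1).choose (r+1) - (n-1-k).choose (r+1) = ∑ i ∈ range k, (n-1-1-i).choose r := by
    omega
  rw [hr, hM]
  constructor
  · have hle : ∀ i ∈ range k, (n-1-k).choose r ≤ (n-1-1-i).choose r := by
      intro i hi
      have := Finset.mem_range.mp hi
      exact Nat.choose_le_choose r (by omega)
    have h2 := Finset.card_nsmul_le_sum (range k) _ _ hle
    simpa using h2
  · have hle : ∀ i ∈ range k, (n-1-1-i).choose r ≤ (n-2).choose r := by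
      intro i hi
      exact Nat.choose_le_choose r (by omega)
    have h2 := Finset.sum_le_card_nsmul (range k) _ _ hle
    simpa using h2

private lemma aux_W (d : ℕ) (hd : 3 ≤ d) :
    Tendsto (fun n : ℕ => ((d-2).factorial : ℝ) *
      (((n-1).choose (d-1) - (n-1-⌈Real.log n⌉₊).choose (d-1) : ℕ) : ℝ) /
      ((⌈Real.log n⌉₊ : ℝ) * (n:ℝ)^(d-2))) atTop (nhds 1) := by
  have hlo : Tendsto (fun n : ℕ => (((n - ⌈Real.log n⌉₊ - d : ℕ) : ℝ) / (n:ℝ))^(d-2))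
      atTop (nhds 1) := by
    have hbase : Tendsto (fun n : ℕ => ((n:ℝ) - (⌈Real.log n⌉₊:ℝ) - d) / (n:ℝ))
        atTop (nhds 1) := by
      have h1 := aux_kn.add ((tendsto_const_nhds (x := (d:ℝ)) (f := atTop)).div_atTop
        tendsto_natCast_atTop_atTop)
      rw [add_zero] at h1
      have h2 := (tendsto_const_nhds (x := (1:ℝ)) (f := atTop)).sub h1
      rw [sub_zero] at h2
      refine h2.congr' ?_
      filter_upwards [eventually_gt_atTop 0] with n hn
      have hn' : (0:ℝ) < n := by exact_mod_cast hn
      field_simp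
      ring
    have hbase2 : Tendsto (fun n : ℕ => (((n - ⌈Real.log n⌉₊ - d : ℕ) : ℝ) / (n:ℝ)))
        atTop (nhds 1) := by
      refine hbase.congr' ?_
      filter_upwards [aux_ev (d+2)] with n ⟨h1, h2, h3, h4⟩
      have : ⌈Real.log n⌉₊ + d ≤ n := by omega
      congr 1
      push_cast [Nat.sub_sub, this]
      ring
    have := hbase2.pow (d-2)
    rwa [one_pow] at this
  refine tendsto_of_tendsto_of_tendsto_of_le_of_le' hlo tendsto_const_nhds ?_ ?_
  · filter_upwards [aux_ev (d+2), eventually_gt_atTop 0] with n ⟨h1, h2, h3, h4⟩ hn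
    set k := ⌈Real.log n⌉₊ with hkdef
    have hk1 : 1 ≤ k := by
      have : (1:ℝ) ≤ (k:ℝ) := by linarith
      exact_mod_cast this
    have hkd : k + d ≤ n := by omega
    obtain ⟨hMlo, hMhi⟩ := aux_M_bounds d hd n hkd hk1
    set Mn := (n-1).choose (d-1) - (n-1-k).choose (d-1) with hMdef
    -- ℕ chain for the lower bound
    have hnat : k * (n - k - d)^(d-2) ≤ (d-2).factorial * Mn := by
      have s1 : (n - k - d)^(d-2) ≤ ((n-1-k) + 1 - (d-2))^(d-2) :=
        Nat.pow_le_pow_left (by omega) _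
      have s2 : ((n-1-k) + 1 - (d-2))^(d-2) ≤ (n-1-k).descFactorial (d-2) :=
        Nat.pow_sub_le_descFactorial _ _
      have s3 : (n-1-k).descFactorial (d-2) = (d-2).factorial * (n-1-k).choose (d-2) :=
        Nat.descFactorial_eq_factorial_mul_choose _ _
      calc k * (n - k - d)^(d-2) ≤ k * ((d-2).factorial * (n-1-k).choose (d-2)) := by
            apply Nat.mul_le_mul_left
            omega
        _ = (d-2).factorial * (k * (n-1-k).choose (d-2)) := by ring
        _ ≤ (d-2).factorial * Mn := Nat.mul_le_mul_left _ hMlo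
    have hkpos : (0:ℝ) < (k:ℝ) := by exact_mod_cast hk1
    have hnpos : (0:ℝ) < (n:ℝ) := by exact_mod_cast hn
    have hnr : (0:ℝ) < (n:ℝ)^(d-2) := by positivity
    rw [div_pow, div_le_div_iff₀ (by positivity) (by positivity)]
    have hcastR : (((n - k - d : ℕ):ℝ))^(d-2) * (k:ℝ) ≤
        ((d-2).factorial : ℝ) * (Mn:ℝ) := by
      have := hnat
      have hR : ((k * (n - k - d)^(d-2) : ℕ) : ℝ) ≤ (((d-2).factorial * Mn : ℕ) : ℝ) := by
        exact_mod_cast this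
      push_cast at hR
      linarith [hR]
    calc (((n - k - d : ℕ):ℝ))^(d-2) * ((k:ℝ) * (n:ℝ)^(d-2))
        = ((((n - k - d : ℕ):ℝ))^(d-2) * (k:ℝ)) * (n:ℝ)^(d-2) := by ring
      _ ≤ (((d-2).factorial : ℝ) * (Mn:ℝ)) * (n:ℝ)^(d-2) := by
          apply mul_le_mul_of_nonneg_right hcastR (by positivity)
  · filter_upwards [aux_ev (d+2), eventually_gt_atTop 0] with n ⟨h1, h2, h3, h4⟩ hn
    set k := ⌈Real.log n⌉₊ with hkdef
    have hk1 : 1 ≤ k := by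
      have : (1:ℝ) ≤ (k:ℝ) := by linarith
      exact_mod_cast this
    have hkd : k + d ≤ n := by omega
    obtain ⟨hMlo, hMhi⟩ := aux_M_bounds d hd n hkd hk1
    set Mn := (n-1).choose (d-1) - (n-1-k).choose (d-1) with hMdef
    have hnat : (d-2).factorial * Mn ≤ k * n^(d-2) := by
      calc (d-2).factorial * Mn ≤ (d-2).factorial * (k * (n-2).choose (d-2)) :=
            Nat.mul_le_mul_left _ hMhi
        _ = k * ((d-2).factorial * (n-2).choose (d-2)) := by ring
        _ = k * (n-2).descFactorial (d-2) := by
            rw [Nat.descFactorial_eq_factorial_mul_choose]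
        _ ≤ k * (n-2)^(d-2) := Nat.mul_le_mul_left _ (Nat.descFactorial_le_pow _ _)
        _ ≤ k * n^(d-2) := Nat.mul_le_mul_left _ (Nat.pow_le_pow_left (by omega) _)
    have hkpos : (0:ℝ) < (k:ℝ) := by exact_mod_cast hk1
    have hnpos : (0:ℝ) < (n:ℝ) := by exact_mod_cast hn
    rw [div_le_one (by positivity)]
    have hR : (((d-2).factorial * Mn : ℕ) : ℝ) ≤ ((k * n^(d-2) : ℕ) : ℝ) := by
      exact_mod_cast hnat
    push_cast at hR
    linarith [hR]

private theorem aux_main (d : ℕ) (hd : 3 ≤ d) (p q : ℕ → ℝ) (M : ℕ → ℕ)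
    (hM : ∀ n, M n = (n-1).choose (d-1) - (n-1-⌈Real.log n⌉₊).choose (d-1))
    (hq : ∀ n, q n = (1 - p n) ^ M n)
    (hp : ∀ n, 0 < p n ∧ p n < 1) (δ : ℝ) (hδ0 : 0 < δ) (hδ1 : δ < 1)
    (hmoment : Tendsto (fun n : ℕ =>
      (n.choose ⌈Real.log n⌉₊ : ℝ) * (1 - q n) ^ (n - ⌈Real.log n⌉₊)) atTop (nhds δ)) :
    Tendsto (fun n : ℕ => (n : ℝ) * q n / (Real.log n)^2) atTop (nhds 1) ∧
    Tendsto (fun n : ℕ => p n * (n:ℝ)^(d-2) / ((d-2).factorial : ℝ)) atTop (nhds 1) := by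
  have hp1 : ∀ n, (0:ℝ) < 1 - p n := fun n => by linarith [(hp n).2]
  have hq_pos : ∀ n, 0 < q n := fun n => by rw [hq]; exact pow_pos (hp1 n) _
  -- eventually M n ≥ 1 and q n < 1
  have hMev : ∀ᶠ n : ℕ in atTop, 1 ≤ M n := by
    filter_upwards [aux_ev (d+2)] with n ⟨h1, h2, h3, h4⟩
    have hk1 : 1 ≤ ⌈Real.log n⌉₊ := by
      have : (1:ℝ) ≤ (⌈Real.log n⌉₊:ℝ) := by linarith
      exact_mod_cast this
    have hkd : ⌈Real.log n⌉₊ + d ≤ n := by omega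
    obtain ⟨hMlo, _⟩ := aux_M_bounds d hd n hkd hk1
    have hcp : 0 < (n - 1 - ⌈Real.log n⌉₊).choose (d-2) := Nat.choose_pos (by omega)
    rw [hM]
    calc 1 ≤ ⌈Real.log n⌉₊ * (n - 1 - ⌈Real.log n⌉₊).choose (d-2) := Nat.mul_pos (by omega) hcp
      _ ≤ _ := hMlo
  have hq_lt1 : ∀ᶠ n : ℕ in atTop, q n < 1 := by
    filter_upwards [hMev] with n h1
    rw [hq]
    exact pow_lt_one₀ (le_of_lt (hp1 n)) (by linarith [(hp n).1]) (by omega)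
  -- Step 1: log of the moment
  have hlogA : Tendsto (fun n : ℕ => Real.log
      ((n.choose ⌈Real.log n⌉₊ : ℝ) * (1 - q n) ^ (n - ⌈Real.log n⌉₊)))
      atTop (nhds (Real.log δ)) :=
    ((Real.continuousAt_log hδ0.ne').tendsto).comp hmoment
  have hlog2top : Tendsto (fun n : ℕ => (Real.log n)^2) atTop atTop := by
    have := aux_logtop.atTop_mul_atTop₀ aux_logtop
    exact this.congr fun n => (pow_two (Real.log n)).symm
  have hlogA2 : Tendsto (fun n : ℕ => Real.log
      ((n.choose ⌈Real.log n⌉₊ : ℝ) * (1 - q n) ^ (n - ⌈Real.log n⌉₊)) / (Real.log n)^2)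
      atTop (nhds 0) := hlogA.div_atTop hlog2top
  -- Step 3: B / (log n)^2 → 1
  have hB : Tendsto (fun n : ℕ =>
      (-(((n - ⌈Real.log n⌉₊ : ℕ) : ℝ)) * Real.log (1 - q n)) / (Real.log n)^2)
      atTop (nhds 1) := by
    have h := aux_L.sub hlogA2
    rw [sub_zero] at h
    refine h.congr' ?_
    filter_upwards [aux_ev (d+2), hq_lt1, eventually_gt_atTop 0] with n ⟨h1, h2, h3, h4⟩ hql hn
    have hkn : ⌈Real.log n⌉₊ ≤ n := by omega
    have hC : (0:ℝ) < (n.choose ⌈Real.log n⌉₊ : ℝ) := by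
      exact_mod_cast Nat.choose_pos hkn
    have h1q : (0:ℝ) < 1 - q n := by linarith
    rw [Real.log_mul hC.ne' (by positivity), Real.log_pow]
    field_simp
    ring
  -- Step 4: -log(1-q) → 0
  have hnk1 : Tendsto (fun n : ℕ => (((n - ⌈Real.log n⌉₊ : ℕ):ℝ))/(n:ℝ)) atTop (nhds 1) := by
    have h2 := (tendsto_const_nhds (x := (1:ℝ)) (f := atTop)).sub aux_kn
    rw [sub_zero] at h2
    refine h2.congr' ?_
    filter_upwards [aux_ev 0, eventually_gt_atTop 0] with n ⟨h1, h2, h3, h4⟩ hn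
    have hkn : ⌈Real.log n⌉₊ ≤ n := by omega
    have hn' : (0:ℝ) < n := by exact_mod_cast hn
    push_cast [hkn]
    field_simp
  have hnegq0 : Tendsto (fun n : ℕ => -Real.log (1 - q n)) atTop (nhds 0) := by
    have hsecond : Tendsto (fun n : ℕ => (Real.log n)^2 / (((n - ⌈Real.log n⌉₊ : ℕ):ℝ)))
        atTop (nhds 0) := by
      have hup0 : Tendsto (fun n : ℕ => 2 * ((Real.log n)^2 / n)) atTop (nhds 0) := by
        have := auxlog2.const_mul 2
        rwa [mul_zero] at this
      refine tendsto_of_tendsto_of_tendsto_of_le_of_le' tendsto_const_nhds hup0 ?_ ?_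
      · filter_upwards [aux_ev 0, eventually_gt_atTop 0] with n ⟨h1, h2, h3, h4⟩ hn
        have hkn : ⌈Real.log n⌉₊ < n := by omega
        have : (0:ℝ) < ((n - ⌈Real.log n⌉₊ : ℕ):ℝ) := by
          have : 0 < n - ⌈Real.log n⌉₊ := by omega
          exact_mod_cast this
        positivity
      · filter_upwards [aux_ev 2, eventually_gt_atTop 0] with n ⟨h1, h2, h3, h4⟩ hn
        have hkd : 2 * (⌈Real.log n⌉₊ + 2) ≤ n := h4
        have hlow : (n:ℝ)/2 ≤ ((n - ⌈Real.log n⌉₊ : ℕ):ℝ) := by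
          have h5 : ⌈Real.log n⌉₊ ≤ n := by omega
          push_cast [h5]
          have : (2:ℝ) * ((⌈Real.log n⌉₊:ℝ) + 2) ≤ n := by exact_mod_cast hkd
          linarith
        have hn' : (0:ℝ) < n := by exact_mod_cast hn
        calc (Real.log n)^2 / (((n - ⌈Real.log n⌉₊ : ℕ):ℝ))
            ≤ (Real.log n)^2 / ((n:ℝ)/2) := by
              apply div_le_div_of_nonneg_left (by positivity) (by positivity) hlow
          _ = 2 * ((Real.log n)^2 / n) := by field_simp
    have h := hB.mul hsecond
    rw [mul_zero] at h
    refine h.congr' ?_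
    filter_upwards [aux_ev 2, eventually_gt_atTop 0] with n ⟨h1, h2, h3, h4⟩ hn
    have hknk : (0:ℝ) < ((n - ⌈Real.log n⌉₊ : ℕ):ℝ) := by
      have : 0 < n - ⌈Real.log n⌉₊ := by omega
      exact_mod_cast this
    have hlogpos : (0:ℝ) < Real.log n := by linarith
    field_simp
  -- Step 5: q → 0
  have hq0 : Tendsto q atTop (nhds 0) := by
    refine tendsto_of_tendsto_of_tendsto_of_le_of_le' tendsto_const_nhds hnegq0 ?_ ?_
    · filter_upwards [] with n
      exact (hq_pos n).le
    · filter_upwards [hq_lt1] with n hql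
      exact (aux_neglog (hq_pos n) hql).1
  have hqratio : Tendsto (fun n => q n / (-Real.log (1 - q n))) atTop (nhds 1) := by
    refine aux_ratio_one hq0 ?_
    filter_upwards [hq_lt1] with n hql
    exact ⟨hq_pos n, hql⟩
  -- Step 7: conclusion 1
  have hnn : Tendsto (fun n : ℕ => (n:ℝ) / (((n - ⌈Real.log n⌉₊ : ℕ):ℝ))) atTop (nhds 1) := by
    have h := hnk1.inv₀ one_ne_zero
    rw [inv_one] at h
    exact h.congr fun n => by rw [inv_div]
  have hT : Tendsto (fun n : ℕ => (n : ℝ) * q n / (Real.log n)^2) atTop (nhds 1) := by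
    have h := (hB.mul hqratio).mul hnn
    rw [mul_one, mul_one] at h
    refine h.congr' ?_
    filter_upwards [aux_ev 2, hq_lt1, eventually_gt_atTop 0] with n ⟨h1, h2, h3, h4⟩ hql hn
    have hknk : (0:ℝ) < ((n - ⌈Real.log n⌉₊ : ℕ):ℝ) := by
      have : 0 < n - ⌈Real.log n⌉₊ := by omega
      exact_mod_cast this
    have hlogpos : (0:ℝ) < Real.log n := by linarith
    have hL : (0:ℝ) < -Real.log (1 - q n) :=
      lt_of_lt_of_le (hq_pos n) (aux_neglog (hq_pos n) hql).1
    have hL' : Real.log (1 - q n) ≠ 0 := (neg_pos.mp hL).ne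
    field_simp [hknk.ne', hlogpos.ne', hL']
  refine ⟨hT, ?_⟩
  -- Step 8
  have hlogT : Tendsto (fun n : ℕ => Real.log ((n : ℝ) * q n / (Real.log n)^2))
      atTop (nhds 0) := by
    have := ((Real.continuousAt_log one_ne_zero).tendsto).comp hT
    rwa [Real.log_one] at this
  have hlogTdiv : Tendsto (fun n : ℕ =>
      Real.log ((n : ℝ) * q n / (Real.log n)^2) / Real.log n) atTop (nhds 0) :=
    hlogT.div_atTop aux_logtop
  have hG : Tendsto (fun n : ℕ => -Real.log (q n) / Real.log n) atTop (nhds 1) := by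
    have h := ((hlogTdiv.neg).sub (auxloglog.const_mul 2)).add
      (tendsto_const_nhds (x := (1:ℝ)) (f := atTop))
    rw [neg_zero, mul_zero, sub_zero, zero_add] at h
    refine h.congr' ?_
    filter_upwards [aux_ev 2, eventually_gt_atTop 0] with n ⟨h1, h2, h3, h4⟩ hn
    have hn' : (0:ℝ) < n := by exact_mod_cast hn
    have hlogpos : (0:ℝ) < Real.log n := by linarith
    have hTpos : (0:ℝ) < (n : ℝ) * q n / (Real.log n)^2 :=
      div_pos (mul_pos hn' (hq_pos n)) (by positivity)
    have hqeq : q n = ((n : ℝ) * q n / (Real.log n)^2) * (Real.log n)^2 / n := by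
      field_simp
    have hlq : Real.log (q n) = Real.log ((n : ℝ) * q n / (Real.log n)^2)
        + 2 * Real.log (Real.log n) - Real.log n := by
      conv_lhs => rw [hqeq]
      rw [Real.log_div (mul_ne_zero hTpos.ne' (by positivity)) hn'.ne',
        Real.log_mul hTpos.ne' (by positivity), Real.log_pow]
      push_cast
      ring
    rw [hlq]
    field_simp
    ring
  -- Step 9
  have hlk : Tendsto (fun n : ℕ => Real.log n / (⌈Real.log n⌉₊ : ℝ)) atTop (nhds 1) := by
    have hlo : Tendsto (fun n : ℕ => 1 - 1/(Real.log n + 1)) atTop (nhds 1) := by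
      have h := (tendsto_const_nhds (x := (1:ℝ)) (f := atTop)).div_atTop
        (tendsto_atTop_add_const_right atTop 1 aux_logtop)
      have h2 := (tendsto_const_nhds (x := (1:ℝ)) (f := atTop)).sub h
      rwa [sub_zero] at h2
    refine tendsto_of_tendsto_of_tendsto_of_le_of_le' hlo tendsto_const_nhds ?_ ?_
    · filter_upwards [aux_ev 0] with n ⟨h1, h2, h3, h4⟩
      have hkpos : (0:ℝ) < (⌈Real.log n⌉₊:ℝ) := by linarith
      have e1 : 1 - 1/(Real.log n + 1) = Real.log n/(Real.log n + 1) := by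
        field_simp
        ring
      rw [e1]
      exact div_le_div_of_nonneg_left (by linarith) hkpos h3
    · filter_upwards [aux_ev 0] with n ⟨h1, h2, h3, h4⟩
      have hkpos : (0:ℝ) < (⌈Real.log n⌉₊:ℝ) := by linarith
      rw [div_le_one hkpos]
      exact h2
  have hW' : Tendsto (fun n : ℕ => ((d-2).factorial : ℝ) * (M n : ℝ) /
      ((⌈Real.log n⌉₊ : ℝ) * (n:ℝ)^(d-2))) atTop (nhds 1) :=
    (aux_W d hd).congr fun n => by rw [hM]
  have htarget2 : Tendsto (fun n : ℕ =>
      -Real.log (1 - p n) * (n:ℝ)^(d-2) / ((d-2).factorial : ℝ)) atTop (nhds 1) := by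
    have h := (hG.mul hlk).mul (hW'.inv₀ one_ne_zero)
    rw [mul_one, inv_one, mul_one] at h
    refine h.congr' ?_
    filter_upwards [aux_ev (d+2), hMev, eventually_gt_atTop 0] with n ⟨h1,h2,h3,h4⟩ hM1 hn
    have hn' : (0:ℝ) < n := by exact_mod_cast hn
    have hlogpos : (0:ℝ) < Real.log n := by linarith
    have hkpos : (0:ℝ) < (⌈Real.log n⌉₊:ℝ) := by linarith
    have hMpos : (0:ℝ) < (M n : ℝ) := by exact_mod_cast hM1
    have hlogq : Real.log (q n) = (M n : ℝ) * Real.log (1 - p n) := by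
      rw [hq]; exact Real.log_pow _ _
    rw [hlogq]
    have hF : (0:ℝ) < ((d-2).factorial : ℝ) := by exact_mod_cast (d-2).factorial_pos
    have hnr : (0:ℝ) < (n:ℝ)^(d-2) := by positivity
    field_simp [hlogpos.ne', hkpos.ne', hMpos.ne', hF.ne', hnr.ne']
  -- Steps 10-13
  have hpowtop : Tendsto (fun n : ℕ => (n:ℝ)^(d-2)) atTop atTop :=
    (tendsto_pow_atTop (by omega : d-2 ≠ 0)).comp tendsto_natCast_atTop_atTop
  have hneglogp0 : Tendsto (fun n : ℕ => -Real.log (1 - p n)) atTop (nhds 0) := by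
    have hFn : Tendsto (fun n : ℕ => ((d-2).factorial : ℝ)/(n:ℝ)^(d-2)) atTop (nhds 0) :=
      tendsto_const_nhds.div_atTop hpowtop
    have h := htarget2.mul hFn
    rw [mul_zero] at h
    refine h.congr' ?_
    filter_upwards [eventually_gt_atTop 0] with n hn
    have hn' : (0:ℝ) < n := by exact_mod_cast hn
    have hF : (0:ℝ) < ((d-2).factorial : ℝ) := by exact_mod_cast (d-2).factorial_pos
    have hnr : (0:ℝ) < (n:ℝ)^(d-2) := by positivity
    field_simp
  have hp0 : Tendsto p atTop (nhds 0) := by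
    refine tendsto_of_tendsto_of_tendsto_of_le_of_le' tendsto_const_nhds hneglogp0 ?_ ?_
    · filter_upwards [] with n; exact (hp n).1.le
    · filter_upwards [] with n; exact (aux_neglog (hp n).1 (hp n).2).1
  have hpratio := aux_ratio_one hp0 (Eventually.of_forall hp)
  have h := hpratio.mul htarget2
  rw [mul_one] at h
  refine h.congr' ?_
  filter_upwards [] with n
  have hL : (0:ℝ) < -Real.log (1 - p n) :=
    lt_of_lt_of_le (hp n).1 (aux_neglog (hp n).1 (hp n).2).1
  have hL' : Real.log (1 - p n) ≠ 0 := (neg_pos.mp hL).ne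
  have hF : (0:ℝ) < ((d-2).factorial : ℝ) := by exact_mod_cast (d-2).factorial_pos
  field_simp [hL', hF.ne']
/-- Fix `d ≥ 3`, `k = ⌈ln n⌉`, and suppose `p = p(n)` is chosen so that the
first moment `C(n,k)·(1-(1-p)^M)^{n-k}` of the number of `k`-dominating sets
tends to a constant `δ ∈ (0,1)`, where `M = C(n-1,d-1) - C(n-1-k,d-1)`.
Then `(1-p)^M ~ (ln n)²/n` and `p ~ (d-2)!/n^{d-2}`. -/
theorem stmt14 (d : ℕ) (hd : 3 ≤ d) (p : ℕ → ℝ)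
    (hp : ∀ n, 0 < p n ∧ p n < 1) (δ : ℝ) (hδ0 : 0 < δ) (hδ1 : δ < 1)
    (hmoment : Tendsto
      (fun n : ℕ => (n.choose ⌈Real.log n⌉₊ : ℝ)
        * (1 - (1 - p n) ^ ((n - 1).choose (d - 1)
            - (n - 1 - ⌈Real.log n⌉₊).choose (d - 1))) ^ (n - ⌈Real.log n⌉₊))
      atTop (nhds δ)) :
    Tendsto
      (fun n : ℕ => (n : ℝ)
        * (1 - p n) ^ ((n - 1).choose (d - 1) - (n - 1 - ⌈Real.log n⌉₊).choose (d - 1))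
        / (Real.log n) ^ 2)
      atTop (nhds 1) ∧
    Tendsto (fun n : ℕ => p n * (n : ℝ) ^ (d - 2) / ((d - 2).factorial : ℝ))
      atTop (nhds 1) := by
  exact aux_main d hd p
    (fun n => (1 - p n) ^ ((n-1).choose (d-1) - (n-1-⌈Real.log n⌉₊).choose (d-1)))
    (fun n => (n-1).choose (d-1) - (n-1-⌈Real.log n⌉₊).choose (d-1))
    (fun n => rfl) (fun n => rfl) hp δ hδ0 hδ1 hmoment
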